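/- The set {12·s(m,n) : n ≥ 1, 1 ≤ m ≤ n, gcd(m,n) = 1} of (scaled) Dedekind sum values has fractional parts that include q/n for every pair of coprime integers (q, n) with 0 ≤ q < n; equivalently, the map from Dedekind sums to their fractional parts is surjective onto ℚ ∩ [0,1). -/

import Mathlib

noncomputable def saw (x : ℚ) : ℚ := if x.den = 1 then 0 else x - ⌊x⌋ - 1/2

noncomputable def dedekindSum (m n : ℤ) : ℚ :=
  ∑ k ∈ Finset.Icc (1:ℤ) n, saw ((k : ℚ) / (n : ℚ)) * saw ((m : ℚ) * (k : ℚ) / (n : ℚ))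

noncomputable def S (m n : ℤ) : ℚ := 12 * dedekindSum m n

/-!
If `m m' ≡ 1 (mod N)` then `12 N s(m, N) ≡ m + m' (mod N)`. Indeed, with `r k = m k mod N`,
`4 N² s(m, N) = ∑_{0<k<N} (2k - N)(2 r k - N)`, and since `k ↦ r k` permutes `1, …, N - 1`,
comparing `∑ (r k)² = ∑ k²` gives `12 ∑ k ⌊m k / N⌋ ≡ m - m' (mod N)`, which is exactly
what the expanded sum needs.

Given `q / n`, pick `m ≥ 1` with `q m ≡ 1 (mod n)` and put `N = n (m² + 1)`,
`m' = q (m² + 1) - m`. Then `m m' ≡ 1 (mod N)` and `m + m' = q (m² + 1)`, so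
`12 s(m, N) ≡ q / n` modulo the integers.
-/

open Finset

lemma saw_intCast (a : ℤ) : saw a = 0 := by
  rw [saw, if_pos (Rat.den_intCast a)]

lemma saw_intCast_div_of_not_dvd {a N : ℤ} (hN : 0 < N) (ha : ¬ N ∣ a) :
    saw (a / N) = ((a % N : ℤ) : ℚ) / N - 1 / 2 := by
  rw [saw, if_neg (by rwa [Rat.den_div_intCast_eq_one_iff _ _ hN.ne']), Int.self_sub_floor]
  lift N to ℕ using hN.le
  rw [Int.cast_natCast, Int.fract_div_intCast_eq_div_intCast_mod]

lemma isCoprime_of_mul_modEq_one {m m' N : ℤ} (h : m * m' ≡ 1 [ZMOD N]) : IsCoprime m N := by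
  obtain ⟨c, hc⟩ := h.symm.dvd
  exact ⟨m', -c, by linear_combination hc⟩

lemma mul_emod_mem_Ico {m N k : ℤ} (hm : IsCoprime m N) (hk : k ∈ Ico 1 N) :
    m * k % N ∈ Ico 1 N := by
  rw [mem_Ico] at hk ⊢
  have hN : 0 < N := by omega
  have hne : m * k % N ≠ 0 := fun h0 => by
    have := Int.le_of_dvd (by omega) (hm.symm.dvd_of_dvd_mul_left (Int.dvd_of_emod_eq_zero h0))
    omega
  have := Int.emod_nonneg (m * k) hN.ne'
  have := Int.emod_lt_of_pos (m * k) hN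
  omega

lemma mul_emod_mul_emod_of_mul_modEq_one {m m' N k : ℤ} (h : m * m' ≡ 1 [ZMOD N])
    (hk : k ∈ Ico 1 N) : m' * (m * k % N) % N = k := by
  rw [mem_Ico] at hk
  have : m' * (m * k % N) ≡ k [ZMOD N] :=
    calc m' * (m * k % N) ≡ m' * (m * k) [ZMOD N] := (Int.mod_modEq _ _).mul_left _
      _ = m * m' * k := by ring
      _ ≡ 1 * k [ZMOD N] := h.mul_right _
      _ = k := one_mul k
  rw [this, Int.emod_eq_of_lt (by omega) hk.2]

lemma sum_Ico_comp_mul_emod {M : Type*} [AddCommMonoid M] {m m' N : ℤ}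
    (h : m * m' ≡ 1 [ZMOD N]) (f : ℤ → M) :
    ∑ k ∈ Ico 1 N, f (m * k % N) = ∑ k ∈ Ico 1 N, f k := by
  have h' : m' * m ≡ 1 [ZMOD N] := by rwa [mul_comm]
  exact sum_nbij' (fun k => m * k % N) (fun k => m' * k % N)
    (fun k hk => mul_emod_mem_Ico (isCoprime_of_mul_modEq_one h) hk)
    (fun k hk => mul_emod_mem_Ico (isCoprime_of_mul_modEq_one h') hk)
    (fun k hk => mul_emod_mul_emod_of_mul_modEq_one h hk)
    (fun k hk => mul_emod_mul_emod_of_mul_modEq_one h' hk) (fun _ _ => rfl)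

lemma two_mul_sum_Ico_one_id {N : ℤ} (hN : 1 ≤ N) : 2 * ∑ k ∈ Ico 1 N, k = N * (N - 1) := by
  induction N, hN using Int.leInduction with
  | base => simp
  | succ N hN ih =>
    rw [← sum_Ico_add_eq_sum_Ico_add_one hN]
    linear_combination ih

lemma six_mul_sum_Ico_one_sq {N : ℤ} (hN : 1 ≤ N) :
    6 * ∑ k ∈ Ico 1 N, k ^ 2 = N * (N - 1) * (2 * N - 1) := by
  induction N, hN using Int.leInduction with
  | base => simp
  | succ N hN ih =>
    rw [← sum_Ico_add_eq_sum_Ico_add_one hN]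
    linear_combination ih

lemma sum_Ico_one_const {N : ℤ} (hN : 1 ≤ N) (c : ℤ) :
    ∑ _k ∈ Ico 1 N, c = (N - 1) * c := by
  rw [sum_const, Int.card_Ico, nsmul_eq_mul, Int.toNat_of_nonneg (by omega)]

lemma four_mul_sq_mul_saw_mul_saw {m N k : ℤ} (hm : IsCoprime m N) (hk : k ∈ Ico 1 N) :
    4 * N ^ 2 * (saw (k / N) * saw (m * k / N)) = ((2 * k - N) * (2 * (m * k % N) - N) : ℤ) := by
  rw [mem_Ico] at hk
  have hN : 0 < N := by omega
  have hk_not_dvd : ¬ N ∣ k := fun h => by have := Int.le_of_dvd (by omega) h; omega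
  have hmk_not_dvd : ¬ N ∣ m * k := fun h => hk_not_dvd (hm.symm.dvd_of_dvd_mul_left h)
  have hmk := saw_intCast_div_of_not_dvd hN hmk_not_dvd
  push_cast at hmk
  rw [saw_intCast_div_of_not_dvd hN hk_not_dvd, hmk, Int.emod_eq_of_lt (by omega) hk.2]
  push_cast
  field_simp
  ring

lemma four_mul_sq_mul_dedekindSum {m N : ℤ} (hm : IsCoprime m N) (hN : 1 ≤ N) :
    4 * N ^ 2 * dedekindSum m N =
      (∑ k ∈ Ico 1 N, (2 * k - N) * (2 * (m * k % N) - N) : ℤ) := by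
  have hN0 : (N : ℚ) ≠ 0 := by exact_mod_cast (by omega : N ≠ 0)
  have hlast : saw ((N : ℚ) / N) * saw (m * N / N) = 0 := by
    rw [div_self hN0, ← Int.cast_one, saw_intCast, zero_mul]
  rw [dedekindSum, ← Ico_insert_right hN, sum_insert right_notMem_Ico, hlast, zero_add,
    mul_sum, Int.cast_sum]
  exact sum_congr rfl fun k hk => four_mul_sq_mul_saw_mul_saw hm hk

lemma twelve_mul_sum_mul_ediv_modEq {m m' N : ℤ} (hN : 1 ≤ N) (h : m * m' ≡ 1 [ZMOD N]) :
    12 * ∑ k ∈ Ico 1 N, k * (m * k / N) ≡ m - m' [ZMOD N] := by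
  set A := ∑ k ∈ Ico 1 N, k * (m * k / N)
  set F := ∑ k ∈ Ico 1 N, (m * k / N) ^ 2
  have hsq : ∑ k ∈ Ico 1 N, (m * k % N) ^ 2 =
      m ^ 2 * ∑ k ∈ Ico 1 N, k ^ 2 - 2 * m * N * A + N ^ 2 * F := by
    rw [sum_congr rfl fun k _ => show (m * k % N) ^ 2 =
      m ^ 2 * k ^ 2 - 2 * m * N * (k * (m * k / N)) + N ^ 2 * (m * k / N) ^ 2 by
        rw [Int.emod_def]; ring]
    simp only [sum_add_distrib, sum_sub_distrib, ← mul_sum, A, F]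
  have hperm := sum_Ico_comp_mul_emod h (· ^ 2)
  have hK2 := six_mul_sum_Ico_one_sq hN
  have hcancel : (m ^ 2 - 1) * (N - 1) * (2 * N - 1) = 12 * m * A - 6 * N * F :=
    mul_left_cancel₀ (by omega : N ≠ 0)
      (by linear_combination -(m ^ 2 - 1) * hK2 - 6 * hsq + 6 * hperm)
  obtain ⟨c, hc⟩ := h.symm.dvd
  have hdvd : N ∣ m * (m - m' - 12 * A) :=
    ⟨(m ^ 2 - 1) * (3 - 2 * N) - c - 6 * F, by linear_combination hcancel - hc⟩
  exact Int.modEq_iff_dvd.mpr ((isCoprime_of_mul_modEq_one h).symm.dvd_of_dvd_mul_left hdvd)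

lemma exists_three_mul_sum_Ico_sub_mul_sub_eq {m m' N : ℤ} (hN : 1 ≤ N)
    (h : m * m' ≡ 1 [ZMOD N]) :
    ∃ t, 3 * ∑ k ∈ Ico 1 N, (2 * k - N) * (2 * (m * k % N) - N) = N * (m + m' + N * t) := by
  obtain ⟨w, hw⟩ := (twelve_mul_sum_mul_ediv_modEq hN h).dvd
  have hexpand : ∑ k ∈ Ico 1 N, (2 * k - N) * (2 * (m * k % N) - N) =
      4 * m * ∑ k ∈ Ico 1 N, k ^ 2 - 4 * N * ∑ k ∈ Ico 1 N, k * (m * k / N)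
        - 2 * N * ∑ k ∈ Ico 1 N, k - 2 * N * ∑ k ∈ Ico 1 N, (m * k % N)
        + (N - 1) * N ^ 2 := by
    rw [sum_congr rfl fun k _ => show (2 * k - N) * (2 * (m * k % N) - N) =
      4 * m * k ^ 2 - 4 * N * (k * (m * k / N)) - 2 * N * k - 2 * N * (m * k % N) + N ^ 2 by
        linear_combination (4 * k) * Int.emod_def (m * k) N]
    simp only [sum_add_distrib, sum_sub_distrib, ← mul_sum, sum_Ico_one_const hN]
    rw [← mul_sum]
  rw [sum_Ico_comp_mul_emod h (fun k => k)] at hexpand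
  refine ⟨2 * m * (2 * N - 3) + w - 3 * (N - 1), ?_⟩
  linear_combination 3 * hexpand + 2 * m * six_mul_sum_Ico_one_sq hN
    - 6 * N * two_mul_sum_Ico_one_id hN + N * hw

lemma exists_twelve_mul_dedekindSum_eq {m m' N : ℤ} (hN : 1 ≤ N) (h : m * m' ≡ 1 [ZMOD N]) :
    ∃ t : ℤ, 12 * N * dedekindSum m N = m + m' + N * t := by
  obtain ⟨t, ht⟩ := exists_three_mul_sum_Ico_sub_mul_sub_eq hN h
  refine ⟨t, mul_left_cancel₀ (by exact_mod_cast (by omega : N ≠ 0) : (N : ℚ) ≠ 0) ?_⟩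
  have hs := four_mul_sq_mul_dedekindSum (isCoprime_of_mul_modEq_one h) hN
  have ht' : (3 : ℚ) * (∑ k ∈ Ico 1 N, (2 * k - N) * (2 * (m * k % N) - N) : ℤ) =
      N * (m + m' + N * t) := by
    exact_mod_cast ht
  linear_combination 3 * hs + ht'

lemma exists_one_le_mul_modEq_one {q n : ℤ} (hn : 0 < n) (h : IsCoprime q n) :
    ∃ m, 1 ≤ m ∧ q * m ≡ 1 [ZMOD n] := by
  obtain ⟨u, v, huv⟩ := h
  refine ⟨u % n + n, by have := Int.emod_nonneg u hn.ne'; omega,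
    Int.modEq_iff_dvd.mpr ⟨v + q * (u / n) - q, ?_⟩⟩
  linear_combination -huv - q * Int.emod_def u n

theorem stmt18 (q n : ℤ) (hq : 0 ≤ q) (hqn : q < n) (hgcd : Int.gcd q n = 1) :
    ∃ m n' : ℤ, 1 ≤ n' ∧ 1 ≤ m ∧ m ≤ n' ∧ Int.gcd m n' = 1 ∧
      Int.fract (12 * dedekindSum m n') = (q : ℚ) / (n : ℚ) := by
  have hn : 0 < n := by omega
  obtain ⟨m, hm, hqm⟩ := exists_one_le_mul_modEq_one hn (Int.isCoprime_iff_gcd_eq_one.mpr hgcd)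
  have hmm' : m * (q * (m ^ 2 + 1) - m) ≡ 1 [ZMOD n * (m ^ 2 + 1)] := by
    convert (hqm.mul_right' (c := m ^ 2 + 1)).sub_right (m ^ 2) using 1 <;> ring
  obtain ⟨t, ht⟩ := exists_twelve_mul_dedekindSum_eq (by nlinarith) hmm'
  refine ⟨m, n * (m ^ 2 + 1), by nlinarith, hm, by nlinarith,
    Int.isCoprime_iff_gcd_eq_one.mp (isCoprime_of_mul_modEq_one hmm'), ?_⟩
  have h12 : 12 * dedekindSum m (n * (m ^ 2 + 1)) = q / n + t := by
    have hc : (m : ℚ) ^ 2 + 1 ≠ 0 := by positivity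
    push_cast at ht
    field_simp
    exact mul_left_cancel₀ hc (by linear_combination ht)
  rw [h12, Int.fract_add_intCast, Int.fract_eq_self]
  exact ⟨div_nonneg (by exact_mod_cast hq) (by exact_mod_cast hn.le),
    (div_lt_one (by exact_mod_cast hn)).mpr (by exact_mod_cast hqn)⟩
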